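/- Let G be a graph, k a positive integer, and (A,B) a separation of G with A ∩ B = ∅ possible; then (A,B) is a separation of order at most k in G if and only if (A,B) is a separation of order at most k in the k-improved graph G^⟨k⟩. Consequently, for any vertex set S ⊆ V(G) and integer q, S is (q,k)-unbreakable in G^⟨k⟩ if and only if S is (q,k)-unbreakable in G. -/

import Mathlib

open Finset

variable {V : Type*} [Fintype V] [DecidableEq V]

/-- A separation of a graph: a pair of vertex sets covering all vertices with no edge
between the two strict sides. Its order is `(A ∩ B).card`. -/
def IsSep (G : SimpleGraph V) (A B : Finset V) : Prop :=
  A ∪ B = Finset.univ ∧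
    ∀ a ∈ A, a ∉ B → ∀ b ∈ B, b ∉ A → ¬ G.Adj a b

/-- The `k`-improved graph `G^⟨k⟩`: `x` and `y` are adjacent iff they are distinct and no
separation of `G` of order at most `k` separates them (i.e. `μ_G(x,y) > k`). -/
def ImprovedGraph (G : SimpleGraph V) (k : ℕ) : SimpleGraph V where
  Adj x y := x ≠ y ∧ ∀ A B : Finset V, IsSep G A B → (A ∩ B).card ≤ k →
    ¬ ((x ∈ A ∧ x ∉ B ∧ y ∈ B ∧ y ∉ A) ∨ (y ∈ A ∧ y ∉ B ∧ x ∈ B ∧ x ∉ A))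
  symm := by
    constructor
    rintro x y ⟨hxy, h⟩
    exact ⟨hxy.symm, fun A B hs ho hc => h A B hs ho hc.symm⟩
  loopless := ⟨fun x h => h.1 rfl⟩

/-- `S` is `(q,k)`-unbreakable in `G`: every separation of order at most `k` has at most `q`
vertices of `S` on one of its sides. -/
def UnbreakableSet (G : SimpleGraph V) (S : Finset V) (q k : ℕ) : Prop :=
  ∀ A B : Finset V, IsSep G A B → (A ∩ B).card ≤ k →
    (A ∩ S).card ≤ q ∨ (B ∩ S).card ≤ q

/-- A clique separation: both strict sides nonempty and the separator is a clique. -/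
def IsCliqueSep (G : SimpleGraph V) (A B : Finset V) : Prop :=
  IsSep G A B ∧ (A \ B).Nonempty ∧ (B \ A).Nonempty ∧ G.IsClique (↑(A ∩ B) : Set V)

/-- `y` is reachable from `x` in `G − W`. -/
def AvoidReach (G : SimpleGraph V) (W : Finset V) (x y : V) : Prop :=
  ∃ p : G.Walk x y, ∀ v ∈ p.support, v ∉ W

/-- `W` is an `X`-`Y` separator: no vertex of `Y \ W` is reachable from `X \ W` in `G − W`. -/
def IsSepSet (G : SimpleGraph V) (W X Y : Finset V) : Prop :=
  ∀ x ∈ X, ∀ y ∈ Y, ¬ AvoidReach G W x y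

/-- `R_{G−W}(X \ W)`: the set of vertices reachable from `X \ W` in `G − W`. -/
def ReachSet (G : SimpleGraph V) (W X : Finset V) : Set V :=
  {y | ∃ x ∈ X, AvoidReach G W x y}

/-- An important `X`-`Y` separator. -/
def IsImpSep (G : SimpleGraph V) (X Y W : Finset V) : Prop :=
  IsSepSet G W X Y ∧
  (∀ W' ⊆ W, W' ≠ W → ¬ IsSepSet G W' X Y) ∧
  ∀ W' : Finset V, IsSepSet G W' X Y → W'.card ≤ W.card →
    ¬ (ReachSet G W X ⊂ ReachSet G W' X)

/-- A `k`-important `X`-`Y` separator. -/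
def IsKImpSep (G : SimpleGraph V) (k : ℕ) (X Y W : Finset V) : Prop :=
  IsImpSep G X Y W ∧ W.card ≤ k ∧
  ∀ W' : Finset V, IsImpSep G X Y W' → W'.card ≤ k → W' ≠ W →
    ¬ (ReachSet G W X ⊆ ReachSet G W' X)

/-- The `k`-important separator extension of `D`. -/
def KImpExt (G : SimpleGraph V) (D : Finset V) (k : ℕ) : Set V :=
  {u | (∃ v, v ≠ u ∧ ∃ S : Finset V, IsKImpSep G k {v} D S ∧ u ∈ S) ∨
       (({u} : Finset V).card ≤ k ∧ IsSepSet G {u} {u} D ∧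
        ∀ S : Finset V, IsSepSet G S {u} D → S.card ≤ k → S = {u})}

/-- `C` is (the vertex set of) a connected component of `G − A`. -/
def IsCompAvoiding (G : SimpleGraph V) (A : Set V) (C : Set V) : Prop :=
  ∃ x, x ∉ A ∧ C = {y | ∃ p : G.Walk x y, ∀ v ∈ p.support, v ∉ A}

/-- `C` is (the vertex set of) a connected component of the induced subgraph `G[S]`. -/
def IsCompWithin (G : SimpleGraph V) (S : Set V) (C : Set V) : Prop :=
  ∃ x ∈ S, C = {y | ∃ p : G.Walk x y, ∀ v ∈ p.support, v ∈ S}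

/-- The (open) neighborhood of a vertex set `C` in `G`. -/
def nbhdSet (G : SimpleGraph V) (C : Set V) : Set V :=
  {v | v ∉ C ∧ ∃ c ∈ C, G.Adj v c}

/-- A connectivity-sensitive star decomposition of `G`, given by its central bag and its
set of leaf bags. -/
structure ConnSensStar (G : SimpleGraph V) where
  center : Finset V
  leaves : Finset (Finset V)
  cover : ∀ v : V, v ∈ center ∨ ∃ L ∈ leaves, v ∈ L
  edges : ∀ x y : V, G.Adj x y →
    (x ∈ center ∧ y ∈ center) ∨ ∃ L ∈ leaves, x ∈ L ∧ y ∈ L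
  inter : ∀ L ∈ leaves, ∀ L' ∈ leaves, L ≠ L' → ∀ v ∈ L, v ∈ L' → v ∈ center
  adh_distinct : ∀ L ∈ leaves, ∀ L' ∈ leaves, L ∩ center = L' ∩ center → L = L'
  comp_nbhd : ∀ L ∈ leaves, ∀ C : Set V,
    IsCompWithin G ((↑L : Set V) \ (↑center : Set V)) C → nbhdSet G C = ↑(L ∩ center)

/-- `(A,B)` is an `S`-stable separation of `G`. -/
def IsStableSep (G : SimpleGraph V) (S : Finset V) (A B : Finset V) : Prop :=
  IsSep G A B ∧ ∃ SL SR : Finset V, SL ∪ SR = S ∧ SL ∩ SR = ∅ ∧ SL ⊆ A ∧ SR ⊆ B ∧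
    ∀ A' B' : Finset V, IsSep G A' B' → SL ⊆ A' → SR ⊆ B' → (A ∩ B).card ≤ (A' ∩ B').card

/-- A `Λ`-boundaried graph: a graph together with an injective partial assignment of
labels to (boundary) vertices. -/
structure BGraph (Λ : Type*) (V : Type*) where
  G : SimpleGraph V
  bd : Λ → Option V
  inj : ∀ l l' v, bd l = some v → bd l' = some v → l = l'

/-- `K` (with embeddings `f₁`, `f₂`) is the gluing `H₁ ⊕ H₂` of two boundaried graphs:
vertices of equal label are identified, and an edge is present iff it is present in
(at least) one of the two graphs. -/
def IsGluing {Λ V₁ V₂ W : Type*} (H₁ : BGraph Λ V₁) (H₂ : BGraph Λ V₂)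
    (K : SimpleGraph W) (f₁ : V₁ → W) (f₂ : V₂ → W) : Prop :=
  Function.Injective f₁ ∧ Function.Injective f₂ ∧
  (∀ w : W, (∃ a, f₁ a = w) ∨ (∃ b, f₂ b = w)) ∧
  (∀ a b, f₁ a = f₂ b ↔ ∃ l, H₁.bd l = some a ∧ H₂.bd l = some b) ∧
  (∀ x y : W, K.Adj x y ↔
    (∃ a b, f₁ a = x ∧ f₁ b = y ∧ H₁.G.Adj a b) ∨
    (∃ a b, f₂ a = x ∧ f₂ b = y ∧ H₂.G.Adj a b))

/-- The weak cut signature value of the boundaried graph `H` at `(A', B')` is at most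
`n − |A' ∩ B'|`: there is a separation of order at most `n` whose sides contain the
boundary vertices labeled by `A'` and `B'`, respectively. -/
def WeakSigLE {Λ : Type*} {V : Type*} [Fintype V] [DecidableEq V]
    (H : BGraph Λ V) (A' B' : Finset Λ) (n : ℕ) : Prop :=
  ∃ A B : Finset V, IsSep H.G A B ∧
    (∀ l ∈ A', ∀ v, H.bd l = some v → v ∈ A) ∧
    (∀ l ∈ B', ∀ v, H.bd l = some v → v ∈ B) ∧ (A ∩ B).card ≤ n

/-- Two `Λ`-boundaried graphs have the same weak cut signature. -/
def SameWeakSig {Λ : Type*} [Fintype Λ] [DecidableEq Λ] {V₁ V₂ : Type*}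
    [Fintype V₁] [DecidableEq V₁] [Fintype V₂] [DecidableEq V₂]
    (H₁ : BGraph Λ V₁) (H₂ : BGraph Λ V₂) : Prop :=
  ∀ A' B' : Finset Λ, A' ∪ B' = Finset.univ →
    ∀ n : ℕ, WeakSigLE H₁ A' B' n ↔ WeakSigLE H₂ A' B' n

theorem IsSep.anti {G H : SimpleGraph V} {A B : Finset V} (hGH : G ≤ H) (h : IsSep H A B) :
    IsSep G A B :=
  ⟨h.1, fun a ha haB b hb hbA hab => h.2 a ha haB b hb hbA (hGH hab)⟩

theorem le_improvedGraph (G : SimpleGraph V) (k : ℕ) : G ≤ ImprovedGraph G k := by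
  intro a b hab
  refine ⟨hab.ne, fun A B hs _ hAB => ?_⟩
  rcases hAB with ⟨ha, haB, hb, hbA⟩ | ⟨hb, hbA, ha, haB⟩
  · exact hs.2 a ha haB b hb hbA hab
  · exact hs.2 b hb hbA a ha haB hab.symm

theorem IsSep.improvedGraph {G : SimpleGraph V} {k : ℕ} {A B : Finset V} (h : IsSep G A B)
    (hk : (A ∩ B).card ≤ k) : IsSep (ImprovedGraph G k) A B :=
  ⟨h.1, fun _ ha haB _ hb hbA hab => hab.2 A B h hk (Or.inl ⟨ha, haB, hb, hbA⟩)⟩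

theorem isSep_improvedGraph_iff_of_card_le {G : SimpleGraph V} {k : ℕ} {A B : Finset V}
    (hk : (A ∩ B).card ≤ k) : IsSep (ImprovedGraph G k) A B ↔ IsSep G A B :=
  ⟨IsSep.anti (le_improvedGraph G k), (IsSep.improvedGraph · hk)⟩

theorem unbreakableSet_improvedGraph_iff (G : SimpleGraph V) (S : Finset V) (q k : ℕ) :
    UnbreakableSet (ImprovedGraph G k) S q k ↔ UnbreakableSet G S q k :=
  forall₂_congr fun _ _ =>
    ⟨fun h hs hk => h (hs.improvedGraph hk) hk,
      fun h hs hk => h (hs.anti (le_improvedGraph G k)) hk⟩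

theorem improved_graph_separations_and_unbreakability_general (G : SimpleGraph V) (k : ℕ) :
    (∀ A B : Finset V,
      (IsSep G A B ∧ (A ∩ B).card ≤ k) ↔ (IsSep (ImprovedGraph G k) A B ∧ (A ∩ B).card ≤ k)) ∧
    (∀ S : Finset V, ∀ q : ℕ,
      UnbreakableSet (ImprovedGraph G k) S q k ↔ UnbreakableSet G S q k) :=
  ⟨fun _ _ => and_congr_left fun hk => (isSep_improvedGraph_iff_of_card_le hk).symm,
    fun S q => unbreakableSet_improvedGraph_iff G S q k⟩

/-- a pair `(A,B)` is a separation of order at most `k` in `G` iff it is a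
separation of order at most `k` in the `k`-improved graph `G^⟨k⟩`; consequently, a set
`S` is `(q,k)`-unbreakable in `G^⟨k⟩` iff it is `(q,k)`-unbreakable in `G`. -/
theorem improved_graph_separations_and_unbreakability (G : SimpleGraph V) (k : ℕ)
    (hk : 0 < k) :
    (∀ A B : Finset V,
      (IsSep G A B ∧ (A ∩ B).card ≤ k) ↔ (IsSep (ImprovedGraph G k) A B ∧ (A ∩ B).card ≤ k)) ∧
    (∀ S : Finset V, ∀ q : ℕ,
      UnbreakableSet (ImprovedGraph G k) S q k ↔ UnbreakableSet G S q k) :=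
  improved_graph_separations_and_unbreakability_general G k
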